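/- arXiv:1910.05532 — 5 statements merged into one kernel-verified Lean document; each statement's English description precedes it below -/
import Mathlib

section
/- The set S = \{\alpha \in \Delta_0^+ : \alpha + \sigma(\alpha) \in \mathbb{Z}_{>0}\cdot\delta\} has exactly n elements; moreover every \alpha \in S satisfies \alpha + \sigma(\alpha) = \delta, and B(\alpha, \alpha') = 0 for all distinct \alpha, \alpha' \in S. In particular, S is the positive system of a subsystem of \Delta_0 consisting of n pairwise orthogonal roots (type nA_1). -/
/-!
Realize the root system of type `D_{2n}^{(1)}` in `ℤ^{2n}` with basis `e_0, …, e_{2n-1}` by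
`α_0 = -e_0 - e_1`, `α_i = e_{i-1} - e_i` for `1 ≤ i ≤ 2n-1` and `α_{2n} = e_{2n-2} + e_{2n-1}`.
Then `B` becomes the standard dot product, `δ` maps to `0`, and `σ` becomes minus the reversal
`e_t ↦ e_{2n-1-t}`. Hence `α + σ(α) ∈ ℤ δ` says that the image `ε(α)` of `α` is a palindrome,
and together with `|ε(α)|² = 2` this leaves `ε(α) = ±(e_k + e_{2n-1-k})` with `k < n`. Since
`α_0 = 0`, the coordinate `α_n` equals `ε_0 + ⋯ + ε_{n-1}`, while the `n`-th coordinate of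
`α + σ(α) = mδ` gives `α_n = m > 0`; this fixes the sign.
Conversely each `e_k + e_{2n-1-k}` lifts to a positive root `β_k` with `β_k + σ(β_k) = δ`,
and these `n` roots are pairwise orthogonal.
-/

lemma Finset.sum_range_eq_add_of_support {M : Type*} [AddCommMonoid M] {f : ℕ → M} {N a : ℕ}
    (ha : a + 1 < N) (hf : ∀ t < N, t ≠ a → t ≠ a + 1 → f t = 0) :
    ∑ t ∈ Finset.range N, f t = f a + f (a + 1) :=
  Finset.sum_eq_add_of_mem a (a + 1) (by simp; omega) (by simp; omega) (by omega)
    fun t ht h => hf t (Finset.mem_range.mp ht) h.1 h.2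

lemma Finset.sum_range_two_mul_of_reflect_eq {M : Type*} [AddCommMonoid M] {f : ℕ → M} (m : ℕ)
    (hf : ∀ t < 2 * m, f (2 * m - 1 - t) = f t) :
    ∑ t ∈ Finset.range (2 * m), f t = ∑ t ∈ Finset.range m, f t + ∑ t ∈ Finset.range m, f t := by
  rw [two_mul, Finset.sum_range_add, ← Finset.sum_range_reflect (fun t => f (m + t))]
  congr 1
  refine Finset.sum_congr rfl fun t ht => ?_
  rw [Finset.mem_range] at ht
  rw [← hf t (by omega)]
  congr 1
  omega

lemma Int.exists_sq_eq_one_of_sum_sq_eq_one {ι : Type*} {s : Finset ι} {f : ι → ℤ}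
    (h : ∑ i ∈ s, f i ^ 2 = 1) : ∃ k ∈ s, f k ^ 2 = 1 ∧ ∀ j ∈ s, j ≠ k → f j = 0 := by
  classical
  obtain ⟨k, hk, hfk⟩ : ∃ k ∈ s, f k ≠ 0 := by
    by_contra! h0
    rw [Finset.sum_eq_zero fun i hi => by rw [h0 i hi]; ring] at h
    exact zero_ne_one h
  have hrest : 0 ≤ ∑ j ∈ s.erase k, f j ^ 2 := Finset.sum_nonneg fun j _ => sq_nonneg (f j)
  have hsplit := Finset.add_sum_erase s (fun j => f j ^ 2) hk
  have hpos : 0 < f k ^ 2 := by positivity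
  have hzero : ∑ j ∈ s.erase k, f j ^ 2 = 0 := by omega
  refine ⟨k, hk, by omega, fun j hj hjk => ?_⟩
  exact pow_eq_zero_iff two_ne_zero |>.mp <|
    (Finset.sum_eq_zero_iff_of_nonneg fun j _ => sq_nonneg (f j)).mp hzero j
      (Finset.mem_erase.mpr ⟨hjk, hj⟩)

namespace Stmt1

/-- The root lattice `Q = ⨁_{i ∈ I} ℤ α_i` for `I = {0,1,…,2n}`. -/
abbrev Q (n : ℕ) := Fin (2 * n + 1) → ℤ

/-- The edges of the Dynkin diagram of affine type `D_{2n}^{(1)}`: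
`{0,2}`, `{1,2}`, `{k,k+1}` for `2 ≤ k ≤ 2n-2`, and `{2n-2, 2n}`. -/
abbrev edge (n i j : ℕ) : Prop :=
  (i + 1 = j ∧ 2 ≤ i ∧ j ≤ 2 * n - 1) ∨ (j + 1 = i ∧ 2 ≤ j ∧ i ≤ 2 * n - 1) ∨
  (i = 0 ∧ j = 2) ∨ (i = 2 ∧ j = 0) ∨ (i = 1 ∧ j = 2) ∨ (i = 2 ∧ j = 1) ∨
  (i = 2 * n - 2 ∧ j = 2 * n) ∨ (i = 2 * n ∧ j = 2 * n - 2)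

/-- The generalized Cartan matrix of type `D_{2n}^{(1)}`. -/
def CM (n : ℕ) (i j : Fin (2 * n + 1)) : ℤ :=
  if i = j then 2 else if edge n (i : ℕ) (j : ℕ) then -1 else 0

/-- The symmetric bilinear form `B` on `Q` determined by the Cartan matrix. -/
def B (n : ℕ) (v w : Q n) : ℤ := ∑ i, ∑ j, v i * CM n i j * w j

/-- The set of positive real roots. -/
def ΔrePos (n : ℕ) : Set (Q n) := {v | (∀ i, 0 ≤ v i) ∧ B n v v = 2}

/-- The set `Δ₀⁺` of positive roots of the finite root system of type `D_{2n}`. -/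
def Δ0Pos (n : ℕ) : Set (Q n) := {v | v ∈ ΔrePos n ∧ v 0 = 0}

/-- The primitive null root
`δ = α_0 + α_1 + 2(α_2 + ⋯ + α_{2n-2}) + α_{2n-1} + α_{2n}`. -/
def δ (n : ℕ) : Q n := fun i =>
  if (i : ℕ) = 0 ∨ (i : ℕ) = 1 ∨ (i : ℕ) = 2 * n - 1 ∨ (i : ℕ) = 2 * n then 1 else 2

/-- The admissible diagram automorphism `σ : α_i ↦ α_{2n-i}` (on coordinates). -/
def σmap (n : ℕ) (v : Q n) : Q n := fun i => v ⟨2 * n - (i : ℕ), by omega⟩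

/-- `S = {α ∈ Δ₀⁺ : α + σ(α) ∈ ℤ_{>0}·δ}`. -/
def S (n : ℕ) : Set (Q n) :=
  {α | α ∈ Δ0Pos n ∧ ∃ m : ℤ, 0 < m ∧ α + σmap n α = m • δ n}

variable {n : ℕ}

def coord (n : ℕ) (v : Q n) (i : ℕ) : ℤ := if h : i < 2 * n + 1 then v ⟨i, h⟩ else 0

lemma coord_val (v : Q n) (i : Fin (2 * n + 1)) : coord n v i = v i := dif_pos i.isLt

/-- The coordinates `ε(v)` of `v` in the realization `α_0 = -e_0 - e_1`, `α_i = e_{i-1} - e_i`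
(`1 ≤ i ≤ 2n-1`), `α_{2n} = e_{2n-2} + e_{2n-1}`; only `t < 2n` is meaningful. -/
def eps (n : ℕ) : Q n →ₗ[ℤ] ℕ → ℤ where
  toFun v t := coord n v (t + 1) - coord n v t - (if t = 1 then coord n v 0 else 0) +
    (if t = 2 * n - 2 then coord n v (2 * n) else 0)
  map_add' v w := by
    funext t
    simp only [coord, Pi.add_apply]
    split_ifs <;> ring
  map_smul' c v := by
    funext t
    simp only [coord, Pi.smul_apply, smul_eq_mul, RingHom.id_apply]
    split_ifs <;> ring

lemma eps_apply (v : Q n) (t : ℕ) :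
    eps n v t = coord n v (t + 1) - coord n v t - (if t = 1 then coord n v 0 else 0) +
      (if t = 2 * n - 2 then coord n v (2 * n) else 0) := rfl

/-- `ε(α_a)`, the image of the simple root `α_a`. -/
def simpleEps (n a t : ℕ) : ℤ :=
  (if t + 1 = a then 1 else 0) - (if t = a then 1 else 0) -
    (if t = 1 ∧ a = 0 then 1 else 0) + (if t = 2 * n - 2 ∧ a = 2 * n then 1 else 0)

lemma coord_single (i : Fin (2 * n + 1)) (j : ℕ) :
    coord n (Pi.single i 1) j = if j = i then 1 else 0 := by
  unfold coord
  have := i.isLt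
  split_ifs with h1 h2 h2 <;> simp_all [Fin.ext_iff]

lemma eps_single (i : Fin (2 * n + 1)) : eps n (Pi.single i 1) = simpleEps n i := by
  funext t
  simp only [eps_apply, coord_single, simpleEps]
  split_ifs <;> omega

lemma eps_eq_sum (v : Q n) (t : ℕ) : eps n v t = ∑ i, v i * simpleEps n i t := by
  conv_lhs => rw [pi_eq_sum_univ' v]
  simp only [map_sum, map_smul, Finset.sum_apply, Pi.smul_apply, smul_eq_mul, eps_single]

lemma sum_simpleEps_mul (hn : 2 ≤ n) (a b : ℕ) (ha : a ≤ 2 * n) :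
    ∑ t ∈ Finset.range (2 * n), simpleEps n a t * simpleEps n b t =
      if a = b then 2 else if edge n a b then -1 else 0 := by
  have supp : ∀ p, p + 1 < 2 * n → (∀ t < 2 * n, t ≠ p → t ≠ p + 1 → simpleEps n a t = 0) →
      ∑ t ∈ Finset.range (2 * n), simpleEps n a t * simpleEps n b t =
        simpleEps n a p * simpleEps n b p + simpleEps n a (p + 1) * simpleEps n b (p + 1) :=
    fun p hp h => Finset.sum_range_eq_add_of_support hp fun t ht h1 h2 => by
      rw [h t ht h1 h2, zero_mul]
  obtain rfl | rfl | ⟨ha1, ha2⟩ : a = 0 ∨ a = 2 * n ∨ (1 ≤ a ∧ a < 2 * n) := by omega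
  · rw [supp 0 (by omega) fun t _ h1 h2 => by unfold simpleEps; grind]
    unfold simpleEps
    grind
  · rw [supp (2 * n - 2) (by omega) fun t _ h1 h2 => by unfold simpleEps; grind]
    unfold simpleEps
    grind (splits := 100)
  · rw [supp (a - 1) (by omega) fun t _ h1 h2 => by unfold simpleEps; grind]
    unfold simpleEps
    grind (splits := 100)

lemma CM_eq_sum (hn : 2 ≤ n) (i j : Fin (2 * n + 1)) :
    CM n i j = ∑ t ∈ Finset.range (2 * n), simpleEps n i t * simpleEps n j t := by
  rw [sum_simpleEps_mul hn i j (by omega), CM]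
  simp only [Fin.ext_iff]

lemma B_eq_sum_eps (hn : 2 ≤ n) (v w : Q n) :
    B n v w = ∑ t ∈ Finset.range (2 * n), eps n v t * eps n w t := by
  simp only [B, CM_eq_sum hn, eps_eq_sum, Finset.mul_sum, Finset.sum_mul]
  symm
  rw [Finset.sum_comm]
  refine (Finset.sum_congr rfl fun j _ => Finset.sum_comm).trans ?_
  rw [Finset.sum_comm]
  exact Finset.sum_congr rfl fun i _ => Finset.sum_congr rfl fun j _ =>
    Finset.sum_congr rfl fun t _ => by ring

lemma coord_δ {t : ℕ} (ht : t ≤ 2 * n) :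
    coord n (δ n) t = if t = 0 ∨ t = 1 ∨ t = 2 * n - 1 ∨ t = 2 * n then 1 else 2 := by
  simp only [coord, δ, dif_pos (show t < 2 * n + 1 by omega)]

lemma eps_δ (hn : 2 ≤ n) {t : ℕ} (ht : t < 2 * n) : eps n (δ n) t = 0 := by
  rw [eps_apply, coord_δ (by omega), coord_δ (by omega), coord_δ (by omega), coord_δ le_rfl]
  rcases (show t = 0 ∨ t = 1 ∨ t = 2 * n - 2 ∨ t = 2 * n - 1 ∨ (2 ≤ t ∧ t < 2 * n - 2) by omega)
    with rfl | rfl | rfl | rfl | ht' <;>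
  simp (disch := omega) only [if_pos, if_neg] <;> norm_num

lemma coord_σmap (v : Q n) {i : ℕ} (hi : i ≤ 2 * n) :
    coord n (σmap n v) i = coord n v (2 * n - i) := by
  simp only [coord, σmap, dif_pos (show i < 2 * n + 1 by omega),
    dif_pos (show 2 * n - i < 2 * n + 1 by omega)]

lemma eps_σmap (v : Q n) {t : ℕ} (ht : t < 2 * n) :
    eps n (σmap n v) t = -eps n v (2 * n - 1 - t) := by
  rw [eps_apply, eps_apply, coord_σmap v (by omega), coord_σmap v (by omega),
    coord_σmap v (by omega), coord_σmap v le_rfl,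
    show 2 * n - (t + 1) = 2 * n - 1 - t by omega, show 2 * n - 1 - t + 1 = 2 * n - t by omega]
  rcases (show t = 1 ∨ t = 2 * n - 2 ∨ (t ≠ 1 ∧ t ≠ 2 * n - 2) by omega) with rfl | rfl | ⟨h1, h2⟩
  · simp (disch := omega) only [if_neg, if_true, Nat.sub_zero,
      show 2 * n - 1 - 1 = 2 * n - 2 by omega]
    ring
  · simp (disch := omega) only [if_neg, if_true, Nat.sub_self,
      show 2 * n - 1 - (2 * n - 2) = 1 by omega, show 2 * n - (2 * n - 2) = 2 by omega]
    ring
  · simp (disch := omega) only [if_neg]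
    ring

lemma sum_range_eps {v : Q n} (hv : v 0 = 0) {i : ℕ} (hi : i ≤ 2 * n - 2) :
    ∑ t ∈ Finset.range i, eps n v t = coord n v i := by
  have h0 : coord n v 0 = 0 := by simpa [coord] using hv
  rw [Finset.sum_congr rfl fun t ht => ?_, Finset.sum_range_sub (coord n v), h0, sub_zero]
  have := Finset.mem_range.mp ht
  rw [eps_apply, h0, if_neg (show t ≠ 2 * n - 2 by omega)]
  split_ifs <;> ring

lemma eq_of_eps_eq (hn : 2 ≤ n) {v w : Q n} (hv : v 0 = 0) (hw : w 0 = 0)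
    (h : ∀ t < 2 * n, eps n v t = eps n w t) : v = w := by
  have hlow : ∀ i ≤ 2 * n - 2, coord n v i = coord n w i := fun i hi => by
    rw [← sum_range_eps hv hi, ← sum_range_eps hw hi]
    exact Finset.sum_congr rfl fun t ht => h t (by rw [Finset.mem_range] at ht; omega)
  have hlast := h (2 * n - 1) (by omega)
  have hnext := h (2 * n - 2) (by omega)
  simp (disch := omega) only [eps_apply, if_neg, if_true, show 2 * n - 1 + 1 = 2 * n by omega,
    show 2 * n - 2 + 1 = 2 * n - 1 by omega] at hlast hnext
  have := hlow (2 * n - 2) le_rfl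
  funext i
  rw [← coord_val v i, ← coord_val w i]
  obtain hi | hi | hi : (i : ℕ) ≤ 2 * n - 2 ∨ (i : ℕ) = 2 * n - 1 ∨ (i : ℕ) = 2 * n := by omega
  · exact hlow i hi
  · rw [hi]; linarith
  · rw [hi]; linarith

section Roots

/-- The positive root with `ε(β n k) = e_k + e_{2n-1-k}`. -/
def β (n k : ℕ) : Q n := fun i =>
  if (i : ℕ) = 2 * n then 1
  else if (i : ℕ) = 2 * n - 1 then (if k = 0 then 0 else 1)
  else if (i : ℕ) ≤ k then 0
  else if (i : ℕ) ≤ 2 * n - 1 - k then 1 else 2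

variable {k : ℕ}

lemma coord_β_of_le (hk : k < n) {i : ℕ} (hi : i ≤ 2 * n - 2) :
    coord n (β n k) i = (if k < i then 1 else 0) + (if 2 * n - 1 - k < i then 1 else 0) := by
  rw [coord, dif_pos (by omega), β]
  dsimp only
  split_ifs <;> omega

lemma coord_β_top : coord n (β n k) (2 * n) = 1 := by
  rw [coord, dif_pos (by omega), β]
  simp

lemma coord_β_sub_one (hn : 1 ≤ n) : coord n (β n k) (2 * n - 1) = if k = 0 then 0 else 1 := by
  rw [coord, dif_pos (by omega), β]
  simp (disch := omega) only [if_neg, if_true]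

lemma eps_β (hn : 2 ≤ n) (hk : k < n) {t : ℕ} (ht : t < 2 * n) :
    eps n (β n k) t = (if t = k then 1 else 0) + (if t = 2 * n - 1 - k then 1 else 0) := by
  rw [eps_apply]
  obtain rfl | rfl | ht' : t = 2 * n - 1 ∨ t = 2 * n - 2 ∨ t < 2 * n - 2 := by omega
  · rw [show 2 * n - 1 + 1 = 2 * n by omega, coord_β_top, coord_β_sub_one (by omega)]
    simp (disch := omega) only [if_neg]
    split_ifs <;> omega
  · rw [show 2 * n - 2 + 1 = 2 * n - 1 by omega, coord_β_top, coord_β_sub_one (by omega),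
      coord_β_of_le hk le_rfl]
    simp (disch := omega) only [if_neg, if_true]
    split_ifs <;> omega
  · rw [coord_β_of_le hk (by omega), coord_β_of_le hk (by omega), coord_β_of_le hk (by omega)]
    simp (disch := omega) only [if_neg, Nat.not_lt_zero, if_false]
    split_ifs <;> omega

lemma B_β (hn : 2 ≤ n) {k' : ℕ} (hk : k < n) (hk' : k' < n) :
    B n (β n k) (β n k') = if k = k' then 2 else 0 := by
  rw [B_eq_sum_eps hn, Finset.sum_congr rfl fun t ht => by
    rw [eps_β hn hk (Finset.mem_range.mp ht), eps_β hn hk' (Finset.mem_range.mp ht)]]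
  simp only [add_mul, mul_add, ite_mul, one_mul, zero_mul, Finset.sum_add_distrib,
    Finset.sum_ite_eq', Finset.mem_range]
  split_ifs <;> omega

lemma β_add_σmap (hn : 2 ≤ n) (hk : k < n) : β n k + σmap n (β n k) = δ n := by
  funext i
  have := i.isLt
  simp only [Pi.add_apply, σmap, β, δ]
  split_ifs <;> omega

lemma β_mem_S (hn : 2 ≤ n) (hk : k < n) : β n k ∈ S n := by
  refine ⟨⟨⟨fun i => ?_, by rw [B_β hn hk hk, if_pos rfl]⟩, ?_⟩, 1, one_pos, by
    rw [β_add_σmap hn hk, one_smul]⟩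
  · simp only [β]
    split_ifs <;> omega
  · simp only [β, Fin.val_zero]
    simp (disch := omega) only [if_neg, if_true, zero_le]

lemma β_injOn (hn : 2 ≤ n) : Set.InjOn (β n) (Set.Iio n) := fun k hk k' hk' h => by
  rw [Set.mem_Iio] at hk hk'
  have h := congrArg (fun v => eps n v k) h
  simp only [eps_β hn hk (show k < 2 * n by omega), eps_β hn hk' (show k < 2 * n by omega)] at h
  split_ifs at h <;> omega

end Roots

lemma eps_symm_of_mem_S (hn : 2 ≤ n) {α : Q n} (hα : α ∈ S n) (t : ℕ) (ht : t < 2 * n) :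
    eps n α (2 * n - 1 - t) = eps n α t := by
  obtain ⟨-, m, -, hsum⟩ := hα
  have h := congrFun (congrArg (eps n) hsum) t
  rw [map_add, map_smul, Pi.add_apply, Pi.smul_apply, eps_δ hn ht, smul_zero,
    eps_σmap α ht] at h
  linarith

lemma coord_mid_of_add_σmap_eq (hn : 2 ≤ n) {α : Q n} {m : ℤ} (hsum : α + σmap n α = m • δ n) :
    coord n α n = m := by
  have h := congrFun hsum ⟨n, by omega⟩
  simp only [Pi.add_apply, Pi.smul_apply, σmap, δ, smul_eq_mul, show 2 * n - n = n by omega] at h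
  rw [if_neg (by omega)] at h
  rw [coord, dif_pos (by omega)]
  linarith

lemma eq_β_of_mem_S (hn : 2 ≤ n) {α : Q n} (hα : α ∈ S n) : ∃ k < n, α = β n k := by
  have hsymm := eps_symm_of_mem_S hn hα
  obtain ⟨⟨⟨-, hB⟩, h0⟩, m, hm, hsum⟩ := hα
  have hnorm : ∑ t ∈ Finset.range n, eps n α t ^ 2 = 1 := by
    rw [B_eq_sum_eps hn, Finset.sum_range_two_mul_of_reflect_eq n fun t ht => by
      rw [hsymm t ht]] at hB
    simp only [← sq] at hB
    omega
  obtain ⟨k, hk, hk1, hk0⟩ := Int.exists_sq_eq_one_of_sum_sq_eq_one hnorm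
  rw [Finset.mem_range] at hk
  have hepsk : eps n α k = 1 := by
    have hsum_k := sum_range_eps h0 (show n ≤ 2 * n - 2 by omega)
    rw [Finset.sum_eq_single_of_mem k (Finset.mem_range.mpr hk) fun j hj hjk => hk0 j hj hjk,
      coord_mid_of_add_σmap_eq hn hsum] at hsum_k
    nlinarith
  have heps : ∀ t < n, eps n α t = if t = k then 1 else 0 := fun t ht => by
    split_ifs with h
    · rw [h, hepsk]
    · exact hk0 t (Finset.mem_range.mpr ht) h
  refine ⟨k, hk, eq_of_eps_eq hn h0 (by simp [β]; omega) fun t ht => ?_⟩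
  rw [eps_β hn hk ht]
  obtain ht' | ht' : t < n ∨ n ≤ t := by omega
  · rw [heps t ht', if_neg (show t ≠ 2 * n - 1 - k by omega), add_zero]
  · rw [← hsymm t ht, heps _ (by omega), if_neg (show t ≠ k by omega), zero_add]
    simp only [show 2 * n - 1 - t = k ↔ t = 2 * n - 1 - k by omega]

theorem statement1 (n : ℕ) (hn : 2 ≤ n) :
    (S n).Finite ∧ (S n).ncard = n ∧
    (∀ α ∈ S n, α + σmap n α = δ n) ∧
    (∀ α ∈ S n, ∀ α' ∈ S n, α ≠ α' → B n α α' = 0) := by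
  have hS : S n = β n '' Set.Iio n := Set.ext fun α =>
    ⟨fun hα => let ⟨k, hk, hαk⟩ := eq_β_of_mem_S hn hα; ⟨k, hk, hαk.symm⟩,
      by rintro ⟨k, hk, rfl⟩; exact β_mem_S hn hk⟩
  refine ⟨hS ▸ (Set.finite_Iio n).image _,
    by rw [hS, (β_injOn hn).ncard_image, Set.ncard_Iio_nat], ?_, ?_⟩
  · intro α hα
    obtain ⟨k, hk, rfl⟩ := eq_β_of_mem_S hn hα
    exact β_add_σmap hn hk
  · intro α hα α' hα' hne
    obtain ⟨k, hk, rfl⟩ := eq_β_of_mem_S hn hα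
    obtain ⟨k', hk', rfl⟩ := eq_β_of_mem_S hn hα'
    rw [B_β hn hk hk', if_neg (by rintro rfl; exact hne rfl)]

end Stmt1
end

section
/- The set S = \{\alpha \in \Delta_0^+ : \alpha + \sigma(\alpha) \in \mathbb{Z}_{>0}\cdot\delta\} has exactly 2 elements; moreover every \alpha \in S satisfies \alpha + \sigma(\alpha) = \delta, and the two elements of S are orthogonal with respect to B. In particular, S is the positive system of a subsystem of \Delta_0 of type 2A_1. -/
/-!
If `α ∈ S` with `α + σ α = m δ`, then `α - σ α` is supported on the four leaves `0, 1, n-1, n`: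
`2α = m δ + m (α₁ - α₀) + c (α_{n-1} - α_n)` with `c = α_{n-1} - α_n`. Since `δ` lies in the
radical of `B` and the leaves are pairwise orthogonal of square length `2`, this gives
`B(α, α) = m² + c²`, so `B(α, α) = 2` forces `m = 1`, `c = ±1`. Hence `S` consists of
`α₁ + ⋯ + α_{n-2} + α_{n-1}` and `α₁ + ⋯ + α_{n-2} + α_n`, and the same formula gives
`B = 1 - 1 = 0` between them.
-/

namespace Stmt2

abbrev Q (n : ℕ) := Fin (n + 1) → ℤ

/-- The edges of the Dynkin diagram of affine type `D_n^{(1)}`: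
`{0,2}`, `{1,2}`, `{k,k+1}` for `2 ≤ k ≤ n-2`, and `{n-2, n}`. -/
abbrev edge (n i j : ℕ) : Prop :=
  (i + 1 = j ∧ 2 ≤ i ∧ j ≤ n - 1) ∨ (j + 1 = i ∧ 2 ≤ j ∧ i ≤ n - 1) ∨
  (i = 0 ∧ j = 2) ∨ (i = 2 ∧ j = 0) ∨ (i = 1 ∧ j = 2) ∨ (i = 2 ∧ j = 1) ∨
  (i = n - 2 ∧ j = n) ∨ (i = n ∧ j = n - 2)

def CM (n : ℕ) (i j : Fin (n + 1)) : ℤ :=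
  if i = j then 2 else if edge n (i : ℕ) (j : ℕ) then -1 else 0

def B (n : ℕ) (v w : Q n) : ℤ := ∑ i, ∑ j, v i * CM n i j * w j

def ΔrePos (n : ℕ) : Set (Q n) := {v | (∀ i, 0 ≤ v i) ∧ B n v v = 2}

def Δ0Pos (n : ℕ) : Set (Q n) := {v | v ∈ ΔrePos n ∧ v 0 = 0}

def δ (n : ℕ) : Q n := fun i =>
  if (i : ℕ) = 0 ∨ (i : ℕ) = 1 ∨ (i : ℕ) = n - 1 ∨ (i : ℕ) = n then 1 else 2

/-- The involution of the index set `{0,…,n}` swapping `0 ↔ 1` and `n-1 ↔ n`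
(for `n ≥ 4`). -/
def τ (n : ℕ) (i : Fin (n + 1)) : Fin (n + 1) :=
  ⟨if (i : ℕ) = 0 then min 1 n else if (i : ℕ) = 1 then 0
    else if (i : ℕ) = n - 1 then n else if (i : ℕ) = n then n - 1 else (i : ℕ),
   by have := i.isLt; split_ifs <;> omega⟩

def σmap (n : ℕ) (v : Q n) : Q n := fun i => v (τ n i)

def S (n : ℕ) : Set (Q n) :=
  {α | α ∈ Δ0Pos n ∧ ∃ m : ℤ, 0 < m ∧ α + σmap n α = m • δ n}

open Finset

variable {n : ℕ}

lemma edge_symm {i j : ℕ} (h : edge n i j) : edge n j i := by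
  rcases h with h | h | h | h | h | h | h | h <;> simp only [edge] <;> omega

lemma CM_comm (i j : Fin (n + 1)) : CM n i j = CM n j i := by
  simp only [CM, eq_comm (a := i), show edge n i j ↔ edge n j i from ⟨edge_symm, edge_symm⟩]

lemma B_comm (v w : Q n) : B n v w = B n w v := by
  simp only [B]
  rw [sum_comm]
  exact sum_congr rfl fun i _ => sum_congr rfl fun j _ => by rw [CM_comm]; ring

lemma B_eq_toBilin' (v w : Q n) : B n v w = Matrix.toBilin' (Matrix.of (CM n)) v w :=
  (Matrix.toBilin'_apply _ _ _).symm

lemma B_add_left (u v w : Q n) : B n (u + v) w = B n u w + B n v w := by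
  simp only [B_eq_toBilin', map_add, LinearMap.add_apply]

lemma B_add_right (u v w : Q n) : B n u (v + w) = B n u v + B n u w := by
  simp only [B_eq_toBilin', map_add]

lemma B_smul_left (c : ℤ) (v w : Q n) : B n (c • v) w = c * B n v w := by
  simp only [B_eq_toBilin', map_smul, LinearMap.smul_apply, smul_eq_mul]

lemma B_smul_right (c : ℤ) (v w : Q n) : B n v (c • w) = c * B n v w := by
  simp only [B_eq_toBilin', map_smul, smul_eq_mul]

lemma sum_CM_mul_eq_of_neighbours (g : ℕ → ℤ) (i : Fin (n + 1)) (N : Finset ℕ)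
    (hN : ∀ k ∈ N, k ≤ n ∧ k ≠ i ∧ edge n i k) (hN' : ∀ k ≤ n, k ≠ i → edge n i k → k ∈ N) :
    ∑ j : Fin (n + 1), CM n i j * g j = 2 * g i - ∑ k ∈ N, g k := by
  have hNr : N ⊆ range (n + 1) := fun k hk => mem_range.2 (Nat.lt_succ_of_le (hN k hk).1)
  calc ∑ j : Fin (n + 1), CM n i j * g j
      = ∑ k ∈ range (n + 1), ((if (i : ℕ) = k then 2 * g k else 0) - if k ∈ N then g k else 0) := by
        rw [← Fin.sum_univ_eq_sum_range]
        refine sum_congr rfl fun j _ => ?_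
        by_cases hij : (i : ℕ) = j
        · have hj : (j : ℕ) ∉ N := fun h => (hN j h).2.1 hij.symm
          rw [CM, if_pos (Fin.ext hij), if_pos hij, if_neg hj, sub_zero]
        · have hj : (j : ℕ) ∈ N ↔ edge n i j :=
            ⟨fun h => (hN j h).2.2, hN' j (Nat.le_of_lt_succ j.isLt) (Ne.symm hij)⟩
          rw [CM, if_neg (fun h => hij (congrArg Fin.val h)), if_neg hij, zero_sub]
          by_cases he : edge n i j
          · rw [if_pos he, if_pos (hj.2 he), neg_one_mul]
          · rw [if_neg he, if_neg (mt hj.1 he), zero_mul, neg_zero]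
    _ = 2 * g i - ∑ k ∈ N, g k := by
        rw [sum_sub_distrib, sum_ite_eq, if_pos (mem_range.2 i.isLt), ← sum_filter,
          filter_mem_eq_inter, inter_eq_right.2 hNr]

lemma sum_CM_mul_δ (hn : 4 ≤ n) (i : Fin (n + 1)) : ∑ j, CM n i j * δ n j = 0 := by
  -- for `n = 4` the branch vertices `2` and `n - 2` coincide
  rcases hn.eq_or_lt with rfl | hn
  · revert i; decide
  obtain ⟨i, hi⟩ := i
  set g : ℕ → ℤ := fun k => if k = 0 ∨ k = 1 ∨ k = n - 1 ∨ k = n then 1 else 2 with hg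
  have key : ∀ N : Finset ℕ, (∀ k ∈ N, k ≤ n ∧ k ≠ i ∧ edge n i k) →
      (∀ k ≤ n, k ≠ i → edge n i k → k ∈ N) →
      ∑ k ∈ N, g k = 2 * g i → ∑ j, CM n ⟨i, hi⟩ j * g j = 0 := fun N hN hN' hsum => by
    rw [sum_CM_mul_eq_of_neighbours g ⟨i, hi⟩ N hN hN', hsum, sub_self]
  rcases (by omega : i = 0 ∨ i = 1 ∨ i = 2 ∨ (3 ≤ i ∧ i ≤ n - 3) ∨ i = n - 2 ∨ i = n - 1 ∨ i = n)
    with rfl | rfl | rfl | ⟨h3, h4⟩ | h | h | h <;> try subst i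
  · exact key {2} (by simp; omega) (fun k _ _ h => by simp; omega) (by simp [hg]; omega)
  · exact key {2} (by simp; omega) (fun k _ _ h => by simp; omega) (by simp [hg]; omega)
  · exact key {0, 1, 3} (by simp; omega) (fun k _ _ h => by simp; omega) (by simp [hg]; omega)
  · refine key {i - 1, i + 1} ?_ (fun k _ _ h => by simp; omega) ?_
    · simp only [mem_insert, mem_singleton]
      rintro k (rfl | rfl) <;> simp [edge] <;> omega
    · rw [sum_pair (by omega)]
      simp [hg]; omega
  · refine key {n - 3, n - 1, n} ?_ (fun k _ _ h => by simp; omega) ?_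
    · simp only [mem_insert, mem_singleton]
      rintro k (rfl | rfl | rfl) <;> simp [edge] <;> omega
    · rw [sum_insert (by simp; omega), sum_pair (by omega)]
      simp [hg]; omega
  · exact key {n - 2} (by simp; omega) (fun k _ _ h => by simp; omega) (by simp [hg]; omega)
  · exact key {n - 2} (by simp; omega) (fun k _ _ h => by simp; omega) (by simp [hg]; omega)

lemma B_δ_right (hn : 4 ≤ n) (v : Q n) : B n v (δ n) = 0 := by
  simp only [B, mul_assoc, ← mul_sum, sum_CM_mul_δ hn, mul_zero, sum_const_zero]

lemma B_δ_left (hn : 4 ≤ n) (v : Q n) : B n (δ n) v = 0 := by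
  rw [B_comm, B_δ_right hn]

lemma four_mul_B_eq (hn : 4 ≤ n) {α α' β β' : Q n} {m m' : ℤ} (h : 2 • α = m • δ n + β)
    (h' : 2 • α' = m' • δ n + β') : 4 * B n α α' = B n β β' := by
  have h2 : B n (2 • α) (2 • α') = 4 * B n α α' := by
    simp only [two_nsmul, B_add_left, B_add_right]
    ring
  rw [← h2, h, h']
  simp only [B_add_left, B_add_right, B_smul_left, B_smul_right, B_δ_left hn, B_δ_right hn]
  ring

/-- `m (α₁ - α₀) + c (α_{n-1} - α_n)`. -/
def ε (n : ℕ) (m c : ℤ) : Q n := fun i =>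
  if (i : ℕ) = 0 then -m else if (i : ℕ) = 1 then m
  else if (i : ℕ) = n - 1 then c else if (i : ℕ) = n then -c else 0

lemma ε_eq_sum_single (hn : 4 ≤ n) (m c : ℤ) : ε n m c =
    m • (Pi.single ⟨1, by omega⟩ 1 - Pi.single ⟨0, by omega⟩ 1) +
      c • (Pi.single ⟨n - 1, by omega⟩ 1 - Pi.single ⟨n, by omega⟩ 1) := by
  funext i
  simp only [ε, Pi.add_apply, Pi.smul_apply, Pi.sub_apply, Pi.single_apply, Fin.ext_iff,
    smul_eq_mul]
  split_ifs <;> omega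

lemma CM_leaf (hn : 4 ≤ n) {a b : ℕ} (ha : a = 0 ∨ a = 1 ∨ a = n - 1 ∨ a = n)
    (hb : b = 0 ∨ b = 1 ∨ b = n - 1 ∨ b = n) (ha' : a < n + 1) (hb' : b < n + 1) :
    CM n ⟨a, ha'⟩ ⟨b, hb'⟩ = if a = b then 2 else 0 := by
  have : ¬ edge n a b := by unfold edge; omega
  simp only [CM, Fin.mk.injEq, this, if_false]

lemma B_ε (hn : 4 ≤ n) (m c m' c' : ℤ) :
    B n (ε n m c) (ε n m' c') = 4 * (m * m' + c * c') := by
  simp only [ε_eq_sum_single hn, B_eq_toBilin', map_add, map_sub, map_smul, LinearMap.add_apply,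
    LinearMap.sub_apply, LinearMap.smul_apply, Matrix.toBilin'_single, Matrix.of_apply]
  simp (disch := omega) only [CM_leaf hn, if_neg, if_true, smul_eq_mul]
  ring

lemma two_smul_eq_of_add_σmap (hn : 4 ≤ n) {α : Q n} {m : ℤ} (h0 : α 0 = 0)
    (h : α + σmap n α = m • δ n) :
    2 • α = m • δ n + ε n m (α ⟨n - 1, by omega⟩ - α (Fin.last n)) := by
  -- coordinatewise; reading `α` on `ℕ` lets `omega` match coordinates once the index is substituted
  set a : ℕ → ℤ := fun k => if hk : k < n + 1 then α ⟨k, hk⟩ else 0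
  have ha : ∀ j : Fin (n + 1), α j = a j := fun j => by simp only [a, dif_pos j.isLt]
  have h1 : min 1 n = 1 := by omega
  funext j
  have hj := congrFun h j
  simp only [Pi.add_apply, Pi.smul_apply, smul_eq_mul, σmap, ha, τ, δ, ε, two_nsmul,
    Fin.val_zero, Fin.val_last, h1] at hj h0 ⊢
  generalize (j : ℕ) = k at hj ⊢
  split_ifs at hj ⊢ <;> subst_vars <;> omega

lemma B_eq_of_two_smul_eq (hn : 4 ≤ n) {α α' : Q n} {m c m' c' : ℤ}
    (h : 2 • α = m • δ n + ε n m c) (h' : 2 • α' = m' • δ n + ε n m' c') :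
    B n α α' = m * m' + c * c' := by
  have := four_mul_B_eq hn h h'
  rw [B_ε hn] at this
  linarith

/-- `γ n k = ∑_{i ∉ {0, k}} α_i`. -/
def γ (n k : ℕ) : Q n := fun i => if (i : ℕ) = 0 ∨ (i : ℕ) = k then 0 else 1

lemma γ_add_σmap (hn : 4 ≤ n) {k : ℕ} (hk : k = n - 1 ∨ k = n) :
    γ n k + σmap n (γ n k) = δ n := by
  funext j
  simp only [Pi.add_apply, σmap, τ, γ, δ]
  split_ifs <;> omega

lemma two_smul_γ (hn : 4 ≤ n) :
    2 • γ n n = (1 : ℤ) • δ n + ε n 1 1 ∧ 2 • γ n (n - 1) = (1 : ℤ) • δ n + ε n 1 (-1) := by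
  constructor <;>
  · funext j
    simp only [Pi.add_apply, one_smul, γ, δ, ε, two_nsmul]
    split_ifs <;> omega

lemma γ_mem_S (hn : 4 ≤ n) {k : ℕ} (hk : k = n - 1 ∨ k = n) : γ n k ∈ S n := by
  refine ⟨⟨⟨fun i => ?_, ?_⟩, by simp [γ]⟩, 1, one_pos, by rw [one_smul, γ_add_σmap hn hk]⟩
  · simp only [γ]; split_ifs <;> omega
  · rcases hk with rfl | rfl
    · rw [B_eq_of_two_smul_eq hn (two_smul_γ hn).2 (two_smul_γ hn).2]; norm_num
    · rw [B_eq_of_two_smul_eq hn (two_smul_γ hn).1 (two_smul_γ hn).1]; norm_num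

lemma eq_one_of_mul_self_add_mul_self_eq_two {m c : ℤ} (hm : 0 < m) (h : m * m + c * c = 2) :
    m = 1 ∧ (c = 1 ∨ c = -1) := by
  obtain rfl : m = 1 := by nlinarith
  refine ⟨rfl, ?_⟩
  have : (c - 1) * (c + 1) = 0 := by linarith
  rcases mul_eq_zero.1 this with h | h
  exacts [.inl (by linarith), .inr (by linarith)]

lemma mem_S_iff (hn : 4 ≤ n) (α : Q n) : α ∈ S n ↔ α = γ n n ∨ α = γ n (n - 1) := by
  refine ⟨fun ⟨⟨⟨_, hB⟩, h0⟩, m, hm, hσ⟩ => ?_, ?_⟩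
  · have h2 := two_smul_eq_of_add_σmap hn h0 hσ
    obtain ⟨rfl, hc | hc⟩ := eq_one_of_mul_self_add_mul_self_eq_two hm
      (by rw [← B_eq_of_two_smul_eq hn h2 h2, hB])
    · rw [hc] at h2
      exact .inl (smul_right_injective (Q n) two_ne_zero (h2.trans (two_smul_γ hn).1.symm))
    · rw [hc] at h2
      exact .inr (smul_right_injective (Q n) two_ne_zero (h2.trans (two_smul_γ hn).2.symm))
  · rintro (rfl | rfl)
    exacts [γ_mem_S hn (.inr rfl), γ_mem_S hn (.inl rfl)]

theorem statement2 (n : ℕ) (hn : 4 ≤ n) :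
    (S n).Finite ∧ (S n).ncard = 2 ∧
    (∀ α ∈ S n, α + σmap n α = δ n) ∧
    (∀ α ∈ S n, ∀ α' ∈ S n, α ≠ α' → B n α α' = 0) := by
  have hS : S n = {γ n n, γ n (n - 1)} := Set.ext (mem_S_iff hn)
  have hne : γ n n ≠ γ n (n - 1) := fun h => by
    have := congrFun h (Fin.last n)
    simp [γ] at this
    omega
  have hB : B n (γ n n) (γ n (n - 1)) = 0 := by
    rw [B_eq_of_two_smul_eq hn (two_smul_γ hn).1 (two_smul_γ hn).2]; norm_num
  refine ⟨hS ▸ Set.toFinite _, hS ▸ Set.ncard_pair hne, fun α hα => ?_, fun α hα α' hα' h => ?_⟩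
  · rcases (mem_S_iff hn α).1 hα with rfl | rfl
    exacts [γ_add_σmap hn (.inr rfl), γ_add_σmap hn (.inl rfl)]
  · rw [hS] at hα hα'
    rcases hα with rfl | rfl <;> rcases hα' with rfl | rfl
    exacts [absurd rfl h, hB, B_comm _ _ ▸ hB, absurd rfl h]

end Stmt2
end

section
/- The set S = \{\alpha \in \Delta_0^+ : \alpha + \sigma(\alpha) \in \mathbb{Z}_{>0}\cdot\delta\} has exactly 3 elements; moreover every \alpha \in S satisfies \alpha + \sigma(\alpha) = \delta, and B(\alpha, \alpha') = 0 for all distinct \alpha, \alpha' \in S. In particular, S is the positive system of a subsystem of \Delta_0 of type 3A_1. -/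
/-!
Statement 3: For the affine root system of type `E_7^{(1)}` with the admissible
diagram automorphism `σ : α_i ↦ α_{6-i}` (`0 ≤ i ≤ 6`), `σ(α_7) = α_7`, the set
`S = {α ∈ Δ₀⁺ : α + σ(α) ∈ ℤ_{>0}·δ}` has exactly `3` elements, every `α ∈ S`
satisfies `α + σ(α) = δ`, and distinct elements of `S` are orthogonal (type `3A₁`).
-/

namespace Stmt3

/-- The root lattice `Q = ⨁_{i ∈ I} ℤ α_i` for `I = {0,1,…,7}`. -/
abbrev Q := Fin 8 → ℤ

/-- The edges of the Dynkin diagram of affine type `E_7^{(1)}`: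
`{i,i+1}` for `0 ≤ i ≤ 5`, and `{3,7}`. -/
abbrev edge (i j : ℕ) : Prop :=
  (i + 1 = j ∧ j ≤ 6) ∨ (j + 1 = i ∧ i ≤ 6) ∨ (i = 3 ∧ j = 7) ∨ (i = 7 ∧ j = 3)

/-- The generalized Cartan matrix of type `E_7^{(1)}`. -/
def CM (i j : Fin 8) : ℤ :=
  if i = j then 2 else if edge (i : ℕ) (j : ℕ) then -1 else 0

/-- The symmetric bilinear form `B` on `Q` determined by the Cartan matrix. -/
def B (v w : Q) : ℤ := ∑ i, ∑ j, v i * CM i j * w j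

/-- The set of positive real roots. -/
def ΔrePos : Set Q := {v | (∀ i, 0 ≤ v i) ∧ B v v = 2}

/-- The set `Δ₀⁺` of positive roots of the finite root system of type `E_7`. -/
def Δ0Pos : Set Q := {v | v ∈ ΔrePos ∧ v 0 = 0}

/-- The primitive null root
`δ = α_0 + 2α_1 + 3α_2 + 4α_3 + 3α_4 + 2α_5 + α_6 + 2α_7`. -/
def δ : Q := ![1, 2, 3, 4, 3, 2, 1, 2]

/-- The involution of the index set: `i ↦ 6-i` for `0 ≤ i ≤ 6`, `7 ↦ 7`. -/
def τ (i : Fin 8) : Fin 8 :=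
  ⟨if (i : ℕ) = 7 then 7 else 6 - (i : ℕ), by have := i.isLt; split_ifs <;> omega⟩

/-- The admissible diagram automorphism `σ : α_i ↦ α_{6-i}` (`i ≤ 6`),
`α_7 ↦ α_7` (on coordinates). -/
def σmap (v : Q) : Q := fun i => v (τ i)

/-- `S = {α ∈ Δ₀⁺ : α + σ(α) ∈ ℤ_{>0}·δ}`. -/
def S : Set Q := {α | α ∈ Δ0Pos ∧ ∃ m : ℤ, 0 < m ∧ α + σmap α = m • δ}

/-!
If `α + σ(α) = m δ` and `α₀ = 0`, then all coordinates of `α` are determined by `m`, `a = α₁`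
and `b = α₂`, and on such vectors `3 B(α, α) = 3 (2a - b)² + (3b - 4m)² + 2m²` is positive
definite. Hence `B(α, α) = 2` forces `m = 1` and leaves exactly three solutions, which turn out
to be pairwise orthogonal.
-/

/-- The unique vector with `α₀ = 0`, `α₁ = a`, `α₂ = b` and `α + σ(α) = m δ`. -/
def sigmaSymm (m a b : ℤ) : Q := ![0, a, b, 2 * m, 3 * m - b, 2 * m - a, m, m]

lemma eq_sigmaSymm {α : Q} {m : ℤ} (h0 : α 0 = 0) (h : α + σmap α = m • δ) :
    α = sigmaSymm m (α 1) (α 2) := by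
  have h1 : α 1 + α 5 = m * 2 := congrFun h 1
  have h2 : α 2 + α 4 = m * 3 := congrFun h 2
  have h3 : α 3 + α 3 = m * 4 := congrFun h 3
  have h6 : α 6 + α 0 = m * 1 := congrFun h 6
  have h7 : α 7 + α 7 = m * 2 := congrFun h 7
  ext i
  fin_cases i <;> simp only [sigmaSymm, Fin.isValue, Fin.zero_eta, Fin.mk_one, Fin.reduceFinMk,
    Matrix.cons_val_zero, Matrix.cons_val_one, Matrix.cons_val] <;> omega

lemma three_mul_B_sigmaSymm (m a b : ℤ) :
    3 * B (sigmaSymm m a b) (sigmaSymm m a b) =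
      3 * (2 * a - b) ^ 2 + (3 * b - 4 * m) ^ 2 + 2 * m ^ 2 := by
  simp +decide only [B, Fin.sum_univ_eight, CM, sigmaSymm, Matrix.cons_val, if_true, if_false]
  ring

lemma eq_of_three_sq_add_sq_add_two_sq_eq_six {m a b : ℤ} (hm : 0 < m)
    (h : 3 * (2 * a - b) ^ 2 + (3 * b - 4 * m) ^ 2 + 2 * m ^ 2 = 6) :
    m = 1 ∧ (a = 0 ∧ b = 1 ∨ a = 1 ∧ b = 1 ∨ a = 1 ∧ b = 2) := by
  obtain rfl : m = 1 := by nlinarith [sq_nonneg (2 * a - b), sq_nonneg (3 * b - 4 * m)]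
  obtain ⟨hb₁, hb₂⟩ : 1 ≤ b ∧ b ≤ 2 := by constructor <;> nlinarith [sq_nonneg (2 * a - b)]
  obtain ⟨ha₁, ha₂⟩ : 0 ≤ a ∧ a ≤ 1 := by constructor <;> nlinarith [sq_nonneg (3 * b - 4)]
  refine ⟨rfl, ?_⟩
  interval_cases a <;> interval_cases b <;> simp_all

lemma S_eq :
    S = {sigmaSymm 1 0 1, sigmaSymm 1 1 1, sigmaSymm 1 1 2} := by
  ext α
  constructor
  · rintro ⟨⟨⟨-, hB⟩, h0⟩, m, hm, hσ⟩
    rw [eq_sigmaSymm h0 hσ] at hB ⊢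
    have hsq : 3 * (2 * α 1 - α 2) ^ 2 + (3 * α 2 - 4 * m) ^ 2 + 2 * m ^ 2 = 6 := by
      rw [← three_mul_B_sigmaSymm, hB]; norm_num
    obtain ⟨rfl, ⟨ha, hb⟩ | ⟨ha, hb⟩ | ⟨ha, hb⟩⟩ := eq_of_three_sq_add_sq_add_two_sq_eq_six hm hsq
    all_goals simp [ha, hb]
  · rintro (rfl | rfl | rfl) <;> exact ⟨⟨⟨by decide, by decide⟩, rfl⟩, 1, one_pos, by decide⟩

theorem statement3 :
    S.Finite ∧ S.ncard = 3 ∧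
    (∀ α ∈ S, α + σmap α = δ) ∧
    (∀ α ∈ S, ∀ α' ∈ S, α ≠ α' → B α α' = 0) := by
  rw [S_eq]
  refine ⟨Set.toFinite _, ?_, ?_, ?_⟩
  · exact Set.ncard_eq_three.mpr ⟨_, _, _, by decide, by decide, by decide, rfl⟩
  · rintro α (rfl | rfl | rfl) <;> decide
  · rintro α (rfl | rfl | rfl) α' (rfl | rfl | rfl) hne <;> first | exact absurd rfl hne | decide

end Stmt3
end

section
/- The set S = \{\alpha \in \Delta_0^+ : \alpha + \sigma(\alpha) + \sigma^2(\alpha) \in \mathbb{Z}_{>0}\cdot\delta\} has exactly 6 elements and admits a partition S = X_1 \sqcup X_2 with the following properties: (a) B(x,y) = 0 for all x \in X_1 and y \in X_2; (b) each X_i is of the form \{\beta, \beta', \beta + \beta'\} for two roots \beta, \beta' \in \Delta_0^+ with B(\beta,\beta') = -1; (c) each of the four roots \beta, \beta' occurring in (b) satisfies \beta + \sigma(\beta) + \sigma^2(\beta) = \delta, while each of the two roots \beta + \beta' satisfies (\beta+\beta') + \sigma(\beta+\beta') + \sigma^2(\beta+\beta') = 2\delta. In particular, S is the positive system of a subsystem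 of \Delta_0 of type 2A_2. -/
/-!
Statement 4: For the affine root system of type `E_6^{(1)}` with the admissible
order-3 diagram automorphism `σ` (`α_0 → α_5 → α_1 → α_0`, `α_6 → α_4 → α_2 → α_6`,
`α_3 → α_3`), the set `S = {α ∈ Δ₀⁺ : α + σ(α) + σ²(α) ∈ ℤ_{>0}·δ}` has exactly
`6` elements and splits as `S = X₁ ⊔ X₂` with: (a) `B(x,y) = 0` for `x ∈ X₁`,
`y ∈ X₂`; (b) each `Xᵢ = {β, β', β+β'}` with `B(β,β') = -1`; (c) each of the four
roots `β, β'` has orbit sum `δ`, and each root `β+β'` has orbit sum `2δ`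
(type `2A₂`).
-/

namespace Stmt4

/-- The root lattice `Q = ⨁_{i ∈ I} ℤ α_i` for `I = {0,1,…,6}`. -/
abbrev Q := Fin 7 → ℤ

/-- The edges of the Dynkin diagram of affine type `E_6^{(1)}`:
`{1,2}`, `{2,3}`, `{3,4}`, `{4,5}`, `{3,6}`, `{0,6}`. -/
abbrev epair (i j : ℕ) : Prop :=
  (i = 1 ∧ j = 2) ∨ (i = 2 ∧ j = 3) ∨ (i = 3 ∧ j = 4) ∨ (i = 4 ∧ j = 5) ∨
  (i = 3 ∧ j = 6) ∨ (i = 0 ∧ j = 6)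

abbrev edge (i j : ℕ) : Prop := epair i j ∨ epair j i

/-- The generalized Cartan matrix of type `E_6^{(1)}`. -/
def CM (i j : Fin 7) : ℤ :=
  if i = j then 2 else if edge (i : ℕ) (j : ℕ) then -1 else 0

/-- The symmetric bilinear form `B` on `Q` determined by the Cartan matrix. -/
def B (v w : Q) : ℤ := ∑ i, ∑ j, v i * CM i j * w j

/-- The set of positive real roots. -/
def ΔrePos : Set Q := {v | (∀ i, 0 ≤ v i) ∧ B v v = 2}

/-- The set `Δ₀⁺` of positive roots of the finite root system of type `E_6`. -/
def Δ0Pos : Set Q := {v | v ∈ ΔrePos ∧ v 0 = 0}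

/-- The primitive null root
`δ = α_0 + α_1 + 2α_2 + 3α_3 + 2α_4 + α_5 + 2α_6`. -/
def δ : Q := ![1, 1, 2, 3, 2, 1, 2]

/-- The admissible order-3 diagram automorphism `σ`
(`α_0 → α_5 → α_1 → α_0`, `α_6 → α_4 → α_2 → α_6`, `α_3 → α_3`), given on
coordinates by `(σ v)_j = v_{p⁻¹(j)}`. -/
def σmap (v : Q) : Q := fun j => v (![1, 5, 4, 3, 6, 0, 2] j)

/-- The orbit sum `α + σ(α) + σ²(α)`. -/
def Osum (α : Q) : Q := α + σmap α + σmap (σmap α)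

/-- `S = {α ∈ Δ₀⁺ : α + σ(α) + σ²(α) ∈ ℤ_{>0}·δ}`. -/
def S : Set Q := {α | α ∈ Δ0Pos ∧ ∃ m : ℤ, 0 < m ∧ Osum α = m • δ}


/-!
An element of `S` with orbit sum `m • δ` has `v₃ = m`, `v₁ + v₅ = m` and
`v₂ + v₄ + v₆ = 2m`, so it is determined by `m, v₁, v₂, v₄`. In these coordinates
`B(v, v)` is a positive definite quadratic form, and `B(v, v) = 2` forces `m ≤ 2`;
what remains is a finite search, which finds two mutually orthogonal `A₂` triples.
-/

lemma B_eq (v w : Q) : B v w =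
    v 0 * (2 * w 0 - w 6) + v 1 * (2 * w 1 - w 2) + v 2 * (-w 1 + 2 * w 2 - w 3) +
    v 3 * (-w 2 + 2 * w 3 - w 4 - w 6) + v 4 * (-w 3 + 2 * w 4 - w 5) +
    v 5 * (-w 4 + 2 * w 5) + v 6 * (-w 0 - w 3 + 2 * w 6) := by
  simp only [B, CM, Fin.sum_univ_seven]
  norm_num [edge, epair, Fin.ext_iff]
  ring

lemma B_comm (v w : Q) : B v w = B w v := by
  rw [B_eq, B_eq]
  ring

lemma B_add_left (u v w : Q) : B (u + v) w = B u w + B v w := by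
  simp only [B_eq, Pi.add_apply]
  ring

lemma B_add_right (u v w : Q) : B u (v + w) = B u v + B u w := by
  rw [B_comm, B_add_left, B_comm v, B_comm w]

lemma Osum_add (v w : Q) : Osum (v + w) = Osum v + Osum w := by
  funext i
  simp only [Osum, σmap, Pi.add_apply]
  ring

lemma Osum_eq_smul_δ_iff (v : Q) (m : ℤ) :
    Osum v = m • δ ↔ v 0 + v 1 + v 5 = m ∧ v 2 + v 4 + v 6 = 2 * m ∧ v 3 = m := by
  simp only [Osum, δ, funext_iff, Pi.add_apply, σmap, Fin.isValue, Pi.smul_apply, smul_eq_mul,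
    Fin.forall_fin_succ, Matrix.cons_val_zero, Matrix.cons_val_one, mul_one, Fin.succ_zero_eq_one,
    Matrix.cons_val, Fin.succ_one_eq_two, Fin.reduceSucc, IsEmpty.forall_iff, and_true]
  omega

/-- The general vector with `v₀ = 0` and orbit sum `m • δ`. -/
def param (m a b c : ℤ) : Q := ![0, a, b, m, c, m - a, 2 * m - b - c]

lemma eq_param_of_Osum_eq {v : Q} {m : ℤ} (h0 : v 0 = 0) (h : Osum v = m • δ) :
    v = param m (v 1) (v 2) (v 4) := by
  obtain ⟨h015, h246, h3⟩ := (Osum_eq_smul_δ_iff v m).1 h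
  funext i
  fin_cases i <;>
    simp only [param, Matrix.cons_val, Fin.isValue, Fin.zero_eta, Fin.mk_one, Fin.reduceFinMk] <;>
    omega

lemma B_param_self (m a b c : ℤ) :
    B (param m a b c) (param m a b c) =
      4 * a ^ 2 + 4 * b ^ 2 + 4 * c ^ 2 + 8 * m ^ 2 + 4 * b * c - 2 * a * b + 2 * a * c
        - 4 * a * m - 8 * b * m - 10 * c * m := by
  simp only [B_eq, param, Matrix.cons_val, Fin.isValue]
  ring

lemma le_two_of_B_param_self_eq_two {m a b c : ℤ}
    (h : B (param m a b c) (param m a b c) = 2) : m ≤ 2 := by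
  rw [B_param_self] at h
  -- Completing squares, `60 B(v, v)` equals
  -- `15 (4a - b + c - 2m)² + 9 (5b + 3c - 6m)² + 9 (4c - 3m)² + 15 m²`.
  have hsos : 15 * m ^ 2 ≤ 120 := by
    nlinarith [sq_nonneg (4 * a - b + c - 2 * m), sq_nonneg (5 * b + 3 * c - 6 * m),
      sq_nonneg (4 * c - 3 * m)]
  nlinarith

lemma ne_zero_of_mem_ΔrePos {v : Q} (hv : v ∈ ΔrePos) : v ≠ 0 := by
  rintro rfl
  have := hv.2
  simp [B] at this

abbrev triple (β β' : Q) : Set Q := {β, β', β + β'}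

structure IsOrbitPair (β β' : Q) : Prop where
  mem_left : β ∈ Δ0Pos
  mem_right : β' ∈ Δ0Pos
  B_eq_neg_one : B β β' = -1
  Osum_left : Osum β = δ
  Osum_right : Osum β' = δ

lemma B_eq_zero_of_mem_triple {β β' γ γ' : Q} (hγ : B β γ = 0) (hγ' : B β γ' = 0)
    (hβγ : B β' γ = 0) (hβγ' : B β' γ' = 0) :
    ∀ x ∈ triple β β', ∀ y ∈ triple γ γ', B x y = 0 := by
  rintro x (rfl | rfl | rfl) y (rfl | rfl | rfl) <;>
    simp only [B_add_left, B_add_right, *, add_zero]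

lemma disjoint_of_B_eq_zero {X Y : Set Q} (hX : X ⊆ ΔrePos)
    (hXY : ∀ x ∈ X, ∀ y ∈ Y, B x y = 0) : Disjoint X Y := by
  refine Set.disjoint_left.2 fun x hx hy => ?_
  have hroot := (hX hx).2
  rw [hXY x hx x hy] at hroot
  exact absurd hroot (by norm_num)

namespace IsOrbitPair

variable {β β' : Q}

lemma add_mem (h : IsOrbitPair β β') : β + β' ∈ Δ0Pos := by
  obtain ⟨⟨hβ, hββ⟩, hβ0⟩ := h.mem_left
  obtain ⟨⟨hβ', hβ'β'⟩, hβ'0⟩ := h.mem_right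
  refine ⟨⟨fun i => add_nonneg (hβ i) (hβ' i), ?_⟩, by simp [hβ0, hβ'0]⟩
  rw [B_add_left, B_add_right, B_add_right, B_comm β' β, hββ, hβ'β', h.B_eq_neg_one]
  norm_num

lemma Osum_add_eq (h : IsOrbitPair β β') : Osum (β + β') = 2 • δ := by
  rw [Osum_add, h.Osum_left, h.Osum_right, two_nsmul]

lemma triple_subset_S (h : IsOrbitPair β β') : triple β β' ⊆ S := by
  have hδ : ∃ m : ℤ, 0 < m ∧ Osum β = m • δ :=
    ⟨1, one_pos, by rw [h.Osum_left, one_smul]⟩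
  have hδ' : ∃ m : ℤ, 0 < m ∧ Osum β' = m • δ :=
    ⟨1, one_pos, by rw [h.Osum_right, one_smul]⟩
  have h2δ : ∃ m : ℤ, 0 < m ∧ Osum (β + β') = m • δ :=
    ⟨2, two_pos, by rw [h.Osum_add_eq, ← natCast_zsmul]; rfl⟩
  rintro v (rfl | rfl | rfl)
  exacts [⟨h.mem_left, hδ⟩, ⟨h.mem_right, hδ'⟩, ⟨h.add_mem, h2δ⟩]

lemma ncard_triple (h : IsOrbitPair β β') : (triple β β').ncard = 3 := by
  have hne : β ≠ β' := by
    rintro rfl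
    have := h.B_eq_neg_one
    rw [h.mem_left.1.2] at this
    norm_num at this
  have hβ : β ≠ β + β' := fun e =>
    ne_zero_of_mem_ΔrePos h.mem_right.1 (by simpa using congrArg (· - β) e.symm)
  have hβ' : β' ≠ β + β' := fun e =>
    ne_zero_of_mem_ΔrePos h.mem_left.1 (by simpa using congrArg (· - β') e.symm)
  exact Set.ncard_eq_three.2 ⟨β, β', β + β', hne, hβ, hβ', rfl⟩

end IsOrbitPair

def β₁ : Q := ![0, 0, 0, 1, 1, 1, 1]
def β₁' : Q := ![0, 1, 1, 1, 1, 0, 0]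
def β₂ : Q := ![0, 0, 1, 1, 1, 1, 0]
def β₂' : Q := ![0, 1, 1, 1, 0, 0, 1]

lemma isOrbitPair_β₁ : IsOrbitPair β₁ β₁' :=
  ⟨⟨⟨by decide, by decide⟩, rfl⟩, ⟨⟨by decide, by decide⟩, rfl⟩,
    by decide, by decide, by decide⟩

lemma isOrbitPair_β₂ : IsOrbitPair β₂ β₂' :=
  ⟨⟨⟨by decide, by decide⟩, rfl⟩, ⟨⟨by decide, by decide⟩, rfl⟩,
    by decide, by decide, by decide⟩

lemma param_mem_of_B_param_self_eq_two {m a b c : ℤ} (hm : 0 < m)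
    (hnn : ∀ i, 0 ≤ param m a b c i) (h : B (param m a b c) (param m a b c) = 2) :
    param m a b c ∈ triple β₁ β₁' ∪ triple β₂ β₂' := by
  have hm2 := le_two_of_B_param_self_eq_two h
  have ha : 0 ≤ a := hnn 1
  have hb : 0 ≤ b := hnn 2
  have hc : 0 ≤ c := hnn 4
  have ham : 0 ≤ m - a := hnn 5
  have hbcm : 0 ≤ 2 * m - b - c := hnn 6
  have hbm : b ≤ 2 * m := by omega
  have hcm : c ≤ 2 * m := by omega
  replace ham : a ≤ m := by omega
  rw [B_param_self] at h
  simp only [triple, Set.mem_union, Set.mem_insert_iff, Set.mem_singleton_iff]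
  interval_cases m <;> interval_cases a <;> interval_cases b <;> interval_cases c <;>
    first | decide | norm_num at h

lemma S_eq : S = triple β₁ β₁' ∪ triple β₂ β₂' := by
  refine subset_antisymm ?_
    (Set.union_subset isOrbitPair_β₁.triple_subset_S isOrbitPair_β₂.triple_subset_S)
  rintro v ⟨⟨⟨hnn, hB⟩, h0⟩, m, hm, hO⟩
  rw [eq_param_of_Osum_eq h0 hO] at hnn hB ⊢
  exact param_mem_of_B_param_self_eq_two hm hnn hB

theorem statement4 :
    S.Finite ∧ S.ncard = 6 ∧
    ∃ X₁ X₂ : Set Q, X₁ ∪ X₂ = S ∧ Disjoint X₁ X₂ ∧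
      (∀ x ∈ X₁, ∀ y ∈ X₂, B x y = 0) ∧
      (∀ X ∈ ({X₁, X₂} : Set (Set Q)), ∃ β β' : Q,
        β ∈ Δ0Pos ∧ β' ∈ Δ0Pos ∧ B β β' = -1 ∧
        X = {β, β', β + β'} ∧
        Osum β = δ ∧ Osum β' = δ ∧ Osum (β + β') = 2 • δ) := by
  have horth : ∀ x ∈ triple β₁ β₁', ∀ y ∈ triple β₂ β₂', B x y = 0 :=
    B_eq_zero_of_mem_triple (by decide) (by decide) (by decide) (by decide)
  have hdisj : Disjoint (triple β₁ β₁') (triple β₂ β₂') :=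
    disjoint_of_B_eq_zero (fun x hx => (isOrbitPair_β₁.triple_subset_S hx).1.1) horth
  have hpair : ∀ {β β' : Q}, IsOrbitPair β β' → ∃ γ γ' : Q,
      γ ∈ Δ0Pos ∧ γ' ∈ Δ0Pos ∧ B γ γ' = -1 ∧ triple β β' = {γ, γ', γ + γ'} ∧
        Osum γ = δ ∧ Osum γ' = δ ∧ Osum (γ + γ') = 2 • δ := fun h =>
    ⟨_, _, h.mem_left, h.mem_right, h.B_eq_neg_one, rfl,
      h.Osum_left, h.Osum_right, h.Osum_add_eq⟩
  refine ⟨S_eq ▸ Set.toFinite _, ?_, _, _, S_eq.symm, hdisj, horth, ?_⟩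
  · rw [S_eq, Set.ncard_union_eq hdisj, isOrbitPair_β₁.ncard_triple,
      isOrbitPair_β₂.ncard_triple]
  · rintro X (rfl | rfl)
    exacts [hpair isOrbitPair_β₁, hpair isOrbitPair_β₂]

end Stmt4
end

section
/- Let c_1, \dots, c_r \in \mathbb{Z}[q,q^{-1}] be finitely many Laurent polynomials such that \sum_{i=1}^r c_i^2 lies in \mathbb{Z}[q] and has constant term 1 (i.e., \sum_{i=1}^r c_i^2 \in 1 + q\,\mathbb{Z}[q]). Then every c_i lies in \mathbb{Z}[q], one has \sum_{i=1}^r c_i(0)^2 = 1, and consequently there is exactly one index i_0 with c_{i_0}(0) = \pm 1, while c_i(0) = 0 for all i \ne i_0. -/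
/-!
Let `m` be the lowest exponent occurring in any of the `cᵢ`. Only the lowest terms contribute to
`q^(2m)` in `∑ cᵢ²`, so its coefficient there is `∑ cᵢ(m)² ≠ 0` (a sum of squares over an ordered
ring). Since `∑ cᵢ²` is a polynomial, `m ≥ 0`, so every `cᵢ` is a polynomial, and the same
computation at `m = 0` gives `∑ cᵢ(0)² = 1`. An integer sum of squares equal to `1` has exactly
one nonzero term, and that term is `±1`.
-/

open Polynomial LaurentPolynomial

namespace LaurentPolynomial

variable {R : Type*}

section Semiring

variable [Semiring R]

theorem coeff_toLaurent_natCast (p : R[X]) (n : ℕ) : (toLaurent p).coeff n = p.coeff n := by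
  rw [coeff_toLaurent]
  exact Finsupp.mapDomain_apply Nat.cast_injective _ n

theorem coeff_toLaurent_of_neg (p : R[X]) {k : ℤ} (hk : k < 0) : (toLaurent p).coeff k = 0 := by
  rw [coeff_toLaurent]
  refine Finsupp.mapDomain_of_notMem_range _ _ ?_
  rintro ⟨n, rfl⟩
  exact (Int.natCast_nonneg n).not_gt hk

theorem coeff_trunc (f : R[T;T⁻¹]) (n : ℕ) : (trunc f).coeff n = f.coeff n := rfl

theorem exists_toLaurent_eq_iff {f : R[T;T⁻¹]} :
    (∃ p : R[X], toLaurent p = f) ↔ ∀ k < 0, f.coeff k = 0 := by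
  constructor
  · rintro ⟨p, rfl⟩ k hk
    exact coeff_toLaurent_of_neg p hk
  · intro h
    refine ⟨trunc f, LaurentPolynomial.ext fun k => ?_⟩
    rcases lt_or_ge k 0 with hk | hk
    · rw [coeff_toLaurent_of_neg _ hk, h k hk]
    · lift k to ℕ using hk
      rw [coeff_toLaurent_natCast, coeff_trunc]

theorem coeff_mul_add_of_forall_lt {f g : R[T;T⁻¹]} {m n : ℤ} (hf : ∀ k < m, f.coeff k = 0)
    (hg : ∀ k < n, g.coeff k = 0) : (f * g).coeff (m + n) = f.coeff m * g.coeff n := by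
  refine AddMonoidAlgebra.coeff_mul_add_of_uniqueAdd fun a b ha hb hab => ?_
  have := not_lt.mp fun h => Finsupp.mem_support_iff.mp ha (hf a h)
  have := not_lt.mp fun h => Finsupp.mem_support_iff.mp hb (hg b h)
  omega

theorem exists_lowest_coeff_ne_zero {ι : Type*} [Fintype ι] (c : ι → R[T;T⁻¹]) {i : ι} {k : ℤ}
    (hk : (c i).coeff k ≠ 0) :
    ∃ m ≤ k, (∃ j, (c j).coeff m ≠ 0) ∧ ∀ j, ∀ l < m, (c j).coeff l = 0 := by
  classical
  set S := Finset.univ.biUnion fun j => (c j).coeff.support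
  have mem_S {j l} (hl : (c j).coeff l ≠ 0) : l ∈ S :=
    Finset.mem_biUnion.mpr ⟨j, Finset.mem_univ j, Finsupp.mem_support_iff.mpr hl⟩
  have hS : S.Nonempty := ⟨k, mem_S hk⟩
  obtain ⟨j, -, hj⟩ := Finset.mem_biUnion.mp (S.min'_mem hS)
  refine ⟨S.min' hS, S.min'_le k (mem_S hk), ⟨j, Finsupp.mem_support_iff.mp hj⟩,
    fun j' l hl => ?_⟩
  by_contra hne
  exact hl.not_ge (S.min'_le l (mem_S hne))

theorem coeff_sum_sq_of_forall_lt {ι : Type*} [Fintype ι] (c : ι → R[T;T⁻¹]) {m : ℤ}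
    (h : ∀ i, ∀ k < m, (c i).coeff k = 0) :
    (∑ i, c i ^ 2).coeff (m + m) = ∑ i, (c i).coeff m ^ 2 := by
  simp only [AddMonoidAlgebra.coeff_sum, Finsupp.finsetSum_apply, sq,
    coeff_mul_add_of_forall_lt (h _) (h _)]

end Semiring

section OrderedRing

variable [Ring R] [LinearOrder R] [IsStrictOrderedRing R] {ι : Type*} [Fintype ι]

theorem exists_toLaurent_eq_of_sum_sq (c : ι → R[T;T⁻¹])
    (h : ∃ p : R[X], toLaurent p = ∑ i, c i ^ 2) (i : ι) : ∃ p : R[X], toLaurent p = c i := by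
  rw [exists_toLaurent_eq_iff] at h ⊢
  intro k hk
  by_contra hne
  obtain ⟨m, hmk, ⟨j, hj⟩, hbelow⟩ := exists_lowest_coeff_ne_zero c hne
  have hsum : ∑ i, (c i).coeff m ^ 2 = 0 := by
    rw [← coeff_sum_sq_of_forall_lt c hbelow, h _ (by omega)]
  have := (Finset.sum_eq_zero_iff_of_nonneg fun i _ => sq_nonneg _).mp hsum j (Finset.mem_univ j)
  exact hj (pow_eq_zero_iff two_ne_zero |>.mp this)

end OrderedRing

end LaurentPolynomial

theorem Int.existsUnique_of_sum_sq_eq_one {ι : Type*} [Fintype ι] (x : ι → ℤ)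
    (h : ∑ i, x i ^ 2 = 1) : ∃! i, (x i = 1 ∨ x i = -1) ∧ ∀ j ≠ i, x j = 0 := by
  classical
  obtain ⟨i, hi⟩ : ∃ i, x i ≠ 0 := by
    by_contra! hall
    simp [hall] at h
  have hsplit := Finset.add_sum_erase Finset.univ (fun j => x j ^ 2) (Finset.mem_univ i)
  have hrest : 0 ≤ ∑ j ∈ Finset.univ.erase i, x j ^ 2 := Finset.sum_nonneg fun j _ => sq_nonneg _
  have hxi : 1 ≤ x i ^ 2 := (one_le_sq_iff_one_le_abs _).mpr (Int.one_le_abs hi)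
  have hrest0 : ∑ j ∈ Finset.univ.erase i, x j ^ 2 = 0 := by linarith
  have hzero : ∀ j ≠ i, x j = 0 := by
    intro j hj
    have := (Finset.sum_eq_zero_iff_of_nonneg fun j _ => sq_nonneg (x j)).mp hrest0 j
      (Finset.mem_erase.mpr ⟨hj, Finset.mem_univ j⟩)
    exact pow_eq_zero_iff two_ne_zero |>.mp this
  have hxi1 : x i ^ 2 = 1 := by linarith
  refine ⟨i, ⟨?_, hzero⟩, fun j ⟨_, hj⟩ => by_contra fun hji => hi (hj i (Ne.symm hji))⟩
  exact sq_eq_one_iff.mp hxi1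

theorem statement13 (r : ℕ) (c : Fin r → LaurentPolynomial ℤ)
    (hpoly : ∃ p : Polynomial ℤ, Polynomial.toLaurent p = ∑ i, c i ^ 2)
    (hconst : (∑ i, c i ^ 2).coeff (0 : ℤ) = 1) :
    (∀ i, ∃ p : Polynomial ℤ, Polynomial.toLaurent p = c i) ∧
    (∑ i, ((c i).coeff (0 : ℤ)) ^ 2 = 1) ∧
    (∃! i₀ : Fin r,
      ((c i₀).coeff (0 : ℤ) = 1 ∨ (c i₀).coeff (0 : ℤ) = -1) ∧
      ∀ i : Fin r, i ≠ i₀ → (c i).coeff (0 : ℤ) = 0) := by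
  have hc := exists_toLaurent_eq_of_sum_sq c hpoly
  have hsq : ∑ i, ((c i).coeff (0 : ℤ)) ^ 2 = 1 := by
    have := coeff_sum_sq_of_forall_lt c (m := 0) fun i => exists_toLaurent_eq_iff.mp (hc i)
    rwa [add_zero, hconst, eq_comm] at this
  exact ⟨hc, hsq, Int.existsUnique_of_sum_sq_eq_one _ hsq⟩
end
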